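/- Let S be a network with no source nodes such that the game G(S) has no multiple-product Nash equilibrium (every Nash equilibrium s satisfies |prod(s)| ≤ 1). Then S is not ∃w-vulnerable: for every Nash equilibrium s of G(S) and every expansion S' of S, no improvement path in G(S') starting at s ends in a Nash equilibrium s' with s >_w s'. -/

import Mathlib

open scoped Classical
noncomputable section

/-- A social network: weighted directed graph, product assignment, thresholds. -/
structure SN (V P : Type) [Fintype V] where
  /-- `E j i` : there is an edge from `j` to `i` (so `j` is a neighbour of `i`). -/
  E : V → V → Prop
  /-- `w j i` is the weight of the edge from `j` to `i`. -/
  w : V → V → ℝ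
  /-- The product set of each node (nonempty). -/
  Pr : V → Set P
  /-- Threshold function. -/
  theta : V → P → ℝ
  PrNe : ∀ i, (Pr i).Nonempty
  wNonneg : ∀ j i, 0 ≤ w j i
  wLeOne : ∀ j i, w j i ≤ 1
  wSumLeOne : ∀ i, (∑ j ∈ Finset.univ.filter (fun j => E j i), w j i) ≤ 1
  thetaPos : ∀ i t, 0 < theta i t
  thetaLeOne : ∀ i t, theta i t ≤ 1

namespace SN

variable {V P : Type} [Fintype V]

/-- A source node has no in-neighbours. -/
def isSource (N : SN V P) (i : V) : Prop := ∀ j, ¬ N.E j i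

/-- A joint strategy is valid if every chosen product belongs to the player's product set
(`none` is the abstention strategy `t₀`). -/
def valid (N : SN V P) (s : V → Option P) : Prop :=
  ∀ i t, s i = some t → t ∈ N.Pr i

/-- `a` is an admissible strategy for player `i`. -/
def validMove (N : SN V P) (i : V) (a : Option P) : Prop :=
  ∀ t, a = some t → t ∈ N.Pr i

/-- The payoff of player `i` in the social network game (with constant `c0` for sources). -/
def payoff (N : SN V P) (c0 : ℝ) (s : V → Option P) (i : V) : ℝ :=
  match s i with
  | none => 0
  | some t =>
    if N.isSource i then c0
    else (∑ j ∈ Finset.univ.filter (fun j => N.E j i ∧ s j = some t), N.w j i) - N.theta i t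

/-- Nash equilibrium of the social network game. -/
def Nash [DecidableEq V] (N : SN V P) (c0 : ℝ) (s : V → Option P) : Prop :=
  N.valid s ∧ ∀ i a, N.validMove i a →
    N.payoff c0 (Function.update s i a) i ≤ N.payoff c0 s i

/-- A profitable deviation from `s` to `s'`. -/
def profDev [DecidableEq V] (N : SN V P) (c0 : ℝ) (s s' : V → Option P) : Prop :=
  ∃ i a, N.validMove i a ∧ s' = Function.update s i a ∧
    N.payoff c0 s i < N.payoff c0 s' i

/-- A finite improvement path from `s` to `s'` (a sequence of profitable deviations). -/
def impPath [DecidableEq V] (N : SN V P) (c0 : ℝ) (s s' : V → Option P) : Prop :=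
  ∃ k, ∃ σ : Fin (k+1) → (V → Option P), σ 0 = s ∧ σ (Fin.last k) = s' ∧
    ∀ m : Fin k, N.profDev c0 (σ m.castSucc) (σ m.succ)

/-- `N'` results from `N` by adding product `t` to the product set of node `i`. -/
def expansionAt (N N' : SN V P) (i : V) (t : P) : Prop :=
  N'.E = N.E ∧ N'.w = N.w ∧ N'.theta = N.theta ∧ t ∉ N.Pr i ∧
  N'.Pr = Function.update N.Pr i (insert t (N.Pr i)) ∧ ∀ j, j ≠ i → N'.Pr j = N.Pr j

/-- `N'` is an expansion of `N`. -/
def expansion (N N' : SN V P) : Prop := ∃ i t, expansionAt N N' i t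

/-- `N'` results from `N` by removing product `t` from the product set of node `i`. -/
def contractionAt (N N' : SN V P) (i : V) (t : P) : Prop :=
  N'.E = N.E ∧ N'.w = N.w ∧ N'.theta = N.theta ∧ t ∈ N.Pr i ∧
  N'.Pr = Function.update N.Pr i (N.Pr i \ {t})

/-- The underlying graph is the simple cycle `0 → 1 → ⋯ → (n-1) → 0`. -/
def simpleCycle {n : ℕ} [NeZero n] (N : SN (Fin n) P) : Prop :=
  ∀ j i, N.E j i ↔ i = j + 1

end SN

/-!
Payoffs only depend on the edges, weights and thresholds, so they are the same in `S` and in the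
expansion `S'`; since `s` is an equilibrium of `G(S)`, the first step of a nontrivial improvement
path must be the node `i₀` switching to the new product `t₀`. Comparing with the equilibrium `s'`,
whose payoffs are below those of `s`, shows that `i₀` gains more from `t₀` in `s` than in `s'`,
so `t₀` is already used in `s`; by uniqueness of products, `s` uses `t₀` alone.

From such an `s` every profitable deviation is a node without a product adopting `t₀`: dropping out
gains nothing as payoffs stay above those of `s` (which are nonnegative), and any other product
has no supporters besides the deviator, exactly as it would from `s`. Such adoptions can only
raise everyone's payoff, so `s'` weakly dominates `s`, contradicting `s >_w s'`.
-/

namespace SN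

variable {V P : Type} [Fintype V]

/-- `prod(s) ⊆ {u}`. -/
def UsesOnly (s : V → Option P) (u : P) : Prop := ∀ j t, s j = some t → t = u

lemma payoff_of_eq_none (N : SN V P) (c0 : ℝ) {s : V → Option P} {i : V} (h : s i = none) :
    N.payoff c0 s i = 0 := by
  simp only [payoff, h]

lemma payoff_le_payoff_of_imp (N : SN V P) (c0 : ℝ) {σ τ : V → Option P} {i : V} {t : P}
    (hσ : σ i = some t) (hτ : τ i = some t) (h : ∀ j, σ j = some t → τ j = some t) :
    N.payoff c0 σ i ≤ N.payoff c0 τ i := by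
  simp only [payoff, hσ, hτ]
  split_ifs
  · exact le_rfl
  · refine sub_le_sub_right
      (Finset.sum_le_sum_of_subset_of_nonneg ?_ fun j _ _ => N.wNonneg j i) _
    intro j hj
    simp only [Finset.mem_filter, Finset.mem_univ, true_and] at hj ⊢
    exact ⟨hj.1, h j hj.2⟩

namespace expansionAt

variable {N N' : SN V P} {i0 : V} {t0 : P}

lemma payoff_eq (hexp : N.expansionAt N' i0 t0) (c0 : ℝ) : N'.payoff c0 = N.payoff c0 := by
  obtain ⟨hE, hw, hth, -⟩ := hexp
  funext σ i
  unfold payoff isSource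
  rw [hE, hw, hth]

lemma validMove_new (hexp : N.expansionAt N' i0 t0) : N'.validMove i0 (some t0) := by
  obtain ⟨-, -, -, -, hPr, -⟩ := hexp
  rintro t ⟨⟩
  simp [hPr]

lemma validMove (hexp : N.expansionAt N' i0 t0) {i : V} {a : Option P}
    (h : N'.validMove i a) : N.validMove i a ∨ (i = i0 ∧ a = some t0) := by
  obtain ⟨-, -, -, -, hPr, hPrne⟩ := hexp
  rcases a with _ | v
  · exact .inl fun t ht => by cases ht
  by_cases hi : i = i0
  · subst hi
    have hv := h v rfl
    rw [hPr, Function.update_self, Set.mem_insert_iff] at hv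
    rcases hv with rfl | hv
    · exact .inr ⟨rfl, rfl⟩
    · exact .inl fun t ht => by cases ht; exact hv
  · exact .inl fun t ht => by cases ht; rw [← hPrne i hi]; exact h v rfl

end expansionAt

variable [DecidableEq V]

lemma payoff_update_le_of_forall_ne_some (N : SN V P) (c0 : ℝ) {σ : V → Option P}
    (τ : V → Option P) {i : V} {t : P} (hσ : ∀ k, k ≠ i → σ k ≠ some t) :
    N.payoff c0 (Function.update σ i (some t)) i ≤
      N.payoff c0 (Function.update τ i (some t)) i := by
  refine N.payoff_le_payoff_of_imp c0 (t := t) (by simp) (by simp) fun k hk => ?_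
  by_cases hki : k = i
  · simp [hki]
  · simp only [Function.update_of_ne hki] at hk
    exact absurd hk (hσ k hki)

lemma exists_eq_some_of_payoff_update_lt (N : SN V P) (c0 : ℝ) {s s' : V → Option P}
    {i : V} {t : P}
    (h : N.payoff c0 (Function.update s' i (some t)) i <
      N.payoff c0 (Function.update s i (some t)) i) :
    ∃ k, s k = some t := by
  by_contra! hs
  exact (N.payoff_update_le_of_forall_ne_some c0 s' fun k _ => hs k).not_gt h

lemma payoff_le_payoff_update_of_usesOnly (N : SN V P) (c0 : ℝ) {τ : V → Option P} {u : P}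
    (hτ : UsesOnly τ u) {i j : V} (hji : j ≠ i) :
    N.payoff c0 τ j ≤ N.payoff c0 (Function.update τ i (some u)) j := by
  rcases hτj : τ j with _ | t
  · rw [N.payoff_of_eq_none c0 hτj,
      N.payoff_of_eq_none c0 (by rwa [Function.update_of_ne hji])]
  obtain rfl := hτ j t hτj
  refine N.payoff_le_payoff_of_imp c0 hτj (by rwa [Function.update_of_ne hji]) fun k hk => ?_
  by_cases hki : k = i
  · simp [hki]
  · rwa [Function.update_of_ne hki]

lemma Nash.payoff_nonneg {N : SN V P} {c0 : ℝ} {s : V → Option P} (hs : N.Nash c0 s) (i : V) :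
    0 ≤ N.payoff c0 s i := by
  have h := hs.2 i none fun t ht => by cases ht
  rwa [N.payoff_of_eq_none c0 (by simp)] at h

lemma impPath.reflTransGen {N : SN V P} {c0 : ℝ} {s s' : V → Option P}
    (h : N.impPath c0 s s') : Relation.ReflTransGen (N.profDev c0) s s' := by
  obtain ⟨k, σ, rfl, rfl, hσ⟩ := h
  suffices ∀ m : Fin (k + 1), Relation.ReflTransGen (N.profDev c0) (σ 0) (σ m) from this _
  intro m
  induction m using Fin.induction with
  | zero => exact .refl
  | succ m ih => exact ih.tail (hσ m)

namespace expansionAt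

variable {N N' : SN V P} {i0 : V} {t0 : P} {c0 : ℝ} {s : V → Option P}

lemma profDev_of_nash (hexp : N.expansionAt N' i0 t0) (hs : N.Nash c0 s) {s1 : V → Option P}
    (hdev : N'.profDev c0 s s1) :
    s1 = Function.update s i0 (some t0) ∧ N.payoff c0 s i0 < N.payoff c0 s1 i0 := by
  obtain ⟨i, a, hva, rfl, hlt⟩ := hdev
  rw [hexp.payoff_eq] at hlt
  rcases hexp.validMove hva with hv | ⟨rfl, rfl⟩
  · exact absurd (hs.2 i a hv) hlt.not_ge
  · exact ⟨rfl, hlt⟩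

lemma profDev_adopts_of_usesOnly (hexp : N.expansionAt N' i0 t0) (hs : N.Nash c0 s)
    {τ τ' : V → Option P} (hτu : UsesOnly τ t0)
    (hτ : ∀ j, N.payoff c0 s j ≤ N.payoff c0 τ j) (hdev : N'.profDev c0 τ τ') :
    ∃ i, τ' = Function.update τ i (some t0) ∧ N.payoff c0 τ i < N.payoff c0 τ' i := by
  obtain ⟨i, a, hva, rfl, hlt⟩ := hdev
  rw [hexp.payoff_eq] at hlt
  rcases a with _ | v
  · rw [N.payoff_of_eq_none c0 (s := Function.update τ i none) (by simp)] at hlt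
    linarith [hs.payoff_nonneg i, hτ i]
  by_cases hv : v = t0
  · exact ⟨i, hv ▸ rfl, hlt⟩
  -- `v` has no supporters in `τ` besides `i`, so switching to it is worth no more than from `s`
  have hvN : N.validMove i (some v) :=
    (hexp.validMove hva).resolve_right fun ⟨_, hv'⟩ => hv (Option.some.inj hv')
  have hle := N.payoff_update_le_of_forall_ne_some c0 s (i := i)
    fun k _ hk => hv (hτu k v hk)
  linarith [hs.2 i (some v) hvN, hτ i]

lemma usesOnly_and_payoff_le_of_reflTransGen (hexp : N.expansionAt N' i0 t0)
    (hs : N.Nash c0 s) (hsu : UsesOnly s t0) {s' : V → Option P}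
    (hpath : Relation.ReflTransGen (N'.profDev c0) s s') :
    UsesOnly s' t0 ∧ ∀ j, N.payoff c0 s j ≤ N.payoff c0 s' j := by
  induction hpath with
  | refl => exact ⟨hsu, fun _ => le_rfl⟩
  | tail _ hdev ih =>
    obtain ⟨hτu, hτ⟩ := ih
    obtain ⟨i, rfl, hlt⟩ := hexp.profDev_adopts_of_usesOnly hs hτu hτ hdev
    refine ⟨fun j t hj => ?_, fun j => ?_⟩
    · by_cases hji : j = i
      · subst hji; simpa using hj.symm
      · exact hτu j t (by rwa [Function.update_of_ne hji] at hj)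
    · by_cases hji : j = i
      · subst hji; linarith [hτ j]
      · exact (hτ j).trans (N.payoff_le_payoff_update_of_usesOnly c0 hτu hji)

end expansionAt

end SN

theorem stmt8_general {V P : Type} [Fintype V] [DecidableEq V] (N : SN V P)
    (c0 : ℝ)
    (hsingle : ∀ s, N.Nash c0 s → ∀ t1 t2 : P,
      (∃ i, s i = some t1) → (∃ i, s i = some t2) → t1 = t2) :
    ∀ s, N.Nash c0 s → ∀ N' : SN V P, N.expansion N' →
      ∀ s', N'.impPath c0 s s' → N'.Nash c0 s' →
        ¬ ((∀ i, N'.payoff c0 s' i ≤ N.payoff c0 s i) ∧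
           ∃ i, N'.payoff c0 s' i < N.payoff c0 s i) := by
  rintro s hs N' ⟨i0, t0, hexp⟩ s' hpath hs' ⟨hle, j, hlt⟩
  rw [hexp.payoff_eq] at hle hlt
  have hgen := hpath.reflTransGen
  rcases hgen.cases_head with rfl | ⟨s1, hdev, -⟩
  · exact lt_irrefl _ hlt
  obtain ⟨rfl, hgain⟩ := hexp.profDev_of_nash hs hdev
  obtain ⟨k, hk⟩ : ∃ k, s k = some t0 := by
    refine N.exists_eq_some_of_payoff_update_lt c0 (s' := s') (i := i0) ?_
    have hstay := hs'.2 i0 (some t0) hexp.validMove_new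
    rw [hexp.payoff_eq] at hstay
    linarith [hle i0]
  have hsu : SN.UsesOnly s t0 := fun i t hi => hsingle s hs t t0 ⟨i, hi⟩ ⟨k, hk⟩
  linarith [(hexp.usesOnly_and_payoff_le_of_reflTransGen hs hsu hgen).2 j]

/-- a network without source nodes whose game has no multiple-product Nash
equilibrium is not ∃w-vulnerable: for every Nash equilibrium `s` and every expansion
`S'`, no improvement path in `G(S')` starting at `s` ends in a Nash equilibrium `s'`
with `s >_w s'`. -/
theorem stmt8 {V P : Type} [Fintype V] [DecidableEq V] (N : SN V P)
    (hnosrc : ∀ i, ¬ N.isSource i) (c0 : ℝ)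
    (hsingle : ∀ s, N.Nash c0 s → ∀ t1 t2 : P,
      (∃ i, s i = some t1) → (∃ i, s i = some t2) → t1 = t2) :
    ∀ s, N.Nash c0 s → ∀ N' : SN V P, N.expansion N' →
      ∀ s', N'.impPath c0 s s' → N'.Nash c0 s' →
        ¬ ((∀ i, N'.payoff c0 s' i ≤ N.payoff c0 s i) ∧
           ∃ i, N'.payoff c0 s' i < N.payoff c0 s i) :=
  stmt8_general N c0 hsingle
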